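/- For each of the two-qubit Bell states Φ⁺ and Φ⁻, and for every choice of dichotomic measurements — i.e. for every assignment to each party of two measurements, each given by an orthonormal basis (v(m,false), v(m,true)) of the space of functions Bool → ℂ with its standard inner product — the resulting empirical model is not logically contextual: for every context c : Fin 2 → M and every outcome o : Fin 2 → Bool with nonzero amplitude in c, there exists a consistent global assignment g (one whose induced outcome is possible in every context) with g i (c i) = o i for all i. -/
import Mathlib


noncomputable section

/-- Inner product of two `m`-qubit states `(Fin m → Bool) → ℂ`. -/
def inner' {m : ℕ} (φ ψ : (Fin m → Bool) → ℂ) : ℂ :=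
  ∑ s : Fin m → Bool, (starRingEnd ℂ) (φ s) * ψ s

/-- Tensor product of local vectors. -/
def tensor {m : ℕ} (v : Fin m → Bool → ℂ) : (Fin m → Bool) → ℂ :=
  fun s => ∏ i, v i (s i)

/-- Standard inner product on `Bool → ℂ`. -/
def inner1 (u w : Bool → ℂ) : ℂ := ∑ b, (starRingEnd ℂ) (u b) * w b

/-- `(u, w)` form an orthonormal basis of `Bool → ℂ`. -/
def OrthonormalPair (u w : Bool → ℂ) : Prop :=
  inner1 u u = 1 ∧ inner1 w w = 1 ∧ inner1 u w = 0

/-- The Bell state `Φ⁺`. -/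
def PhiPlus : (Fin 2 → Bool) → ℂ :=
  fun s => if s 0 = s 1 then (Real.sqrt 2 : ℂ)⁻¹ else 0

/-- The Bell state `Φ⁻`. -/
def PhiMinus : (Fin 2 → Bool) → ℂ :=
  fun s => if s 0 = s 1 then 0 else (Real.sqrt 2 : ℂ)⁻¹

theorem sum_pi_bool (F : (Fin 2 → Bool) → ℂ) :
    ∑ s, F s = F ![false,false] + F ![false,true] + F ![true,false] + F ![true,true] := by
  rw [← Fintype.sum_equiv (piFinTwoEquiv (fun _ => Bool)).symm
    (fun p => F ((piFinTwoEquiv (fun _ => Bool)).symm p)) F (fun _ => rfl)]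
  rw [Fintype.sum_prod_type]
  have h : ∀ x y : Bool, (Fin.cons x (Fin.cons y finZeroElim) : Fin 2 → Bool) = ![x,y] := by
    intro x y; funext i; fin_cases i <;> rfl
  simp only [Fintype.sum_bool, piFinTwoEquiv, Equiv.coe_fn_symm_mk, h]
  ring

open Matrix

theorem inner1_conj_symm (u w : Bool → ℂ) : inner1 u w = (starRingEnd ℂ) (inner1 w u) := by
  simp [inner1, mul_comm]

theorem cancel_mat {n : Type*} [Fintype n] [DecidableEq n]
    (A B X : Matrix n n ℂ) (h : A * B = 1) : A * (B * X) = X := by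
  rw [← Matrix.mul_assoc, h, Matrix.one_mul]

/-- Neither Bell state is logically contextual for any choice of dichotomic
measurements (two orthonormal bases per party, the measurement set being
`Bool`): every possible outcome of every context extends to a consistent global
assignment. -/
theorem bell_not_logically_contextual
    (ψ : (Fin 2 → Bool) → ℂ) (hψ : ψ = PhiPlus ∨ ψ = PhiMinus)
    (v : Fin 2 → Bool → Bool → Bool → ℂ)
    (hv : ∀ i m, OrthonormalPair (v i m false) (v i m true))
    (c : Fin 2 → Bool) (o : Fin 2 → Bool)
    (ho : inner' (tensor fun i => v i (c i) (o i)) ψ ≠ 0) :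
    ∃ g : Fin 2 → Bool → Bool,
      (∀ c' : Fin 2 → Bool,
        inner' (tensor fun i => v i (c' i) (g i (c' i))) ψ ≠ 0) ∧
      ∀ i, g i (c i) = o i := by
  classical
  set r : ℂ := (Real.sqrt 2 : ℂ)⁻¹ with hr_def
  have hr : r ≠ 0 := by
    have h2 : Real.sqrt 2 ≠ 0 := (Real.sqrt_pos.mpr (by norm_num)).ne'
    simp [hr_def, Complex.ofReal_ne_zero, h2]
  -- the "coefficient matrix" of ψ
  obtain ⟨C, hC, hAmp⟩ :
      ∃ C : Matrix Bool Bool ℂ, C * Cᴴ = 1 ∧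
        ∀ f : Fin 2 → Bool → ℂ, inner' (tensor f) ψ =
          (∑ s, ∑ t, (starRingEnd ℂ) (f 0 s) * (C s t * (starRingEnd ℂ) (f 1 t))) * r := by
    rcases hψ with h | h
    · refine ⟨1, by simp, fun f => ?_⟩
      subst h
      rw [inner', sum_pi_bool]
      simp [tensor, PhiPlus, Fin.prod_univ_two, Fintype.sum_bool, Matrix.one_apply]
      ring
    · refine ⟨Matrix.of fun s t => if s = t then 0 else 1, ?_, fun f => ?_⟩
      · ext s t
        simp [Matrix.mul_apply, Fintype.sum_bool, Matrix.conjTranspose_apply, Matrix.one_apply]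
        cases s <;> cases t <;> simp
      · subst h
        rw [inner', sum_pi_bool]
        simp [tensor, PhiMinus, Fin.prod_univ_two, Fintype.sum_bool]
        ring
  -- local unitaries
  set P : Bool → Matrix Bool Bool ℂ :=
    fun m => Matrix.of fun a s => (starRingEnd ℂ) (v 0 m a s) with hP_def
  set Q : Bool → Matrix Bool Bool ℂ :=
    fun n => Matrix.of fun b t => (starRingEnd ℂ) (v 1 n b t) with hQ_def
  have unit_of : ∀ (i : Fin 2) (m : Bool),
      (Matrix.of fun a s => (starRingEnd ℂ) (v i m a s)) *
        (Matrix.of fun a s => (starRingEnd ℂ) (v i m a s))ᴴ = 1 := by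
    intro i m
    obtain ⟨h1, h2, h3⟩ := hv i m
    have h4 : inner1 (v i m true) (v i m false) = 0 := by
      rw [inner1_conj_symm, h3]; simp
    ext a a'
    have : ∀ a a' : Bool,
        ((Matrix.of fun a s => (starRingEnd ℂ) (v i m a s)) *
          (Matrix.of fun a s => (starRingEnd ℂ) (v i m a s))ᴴ) a a'
          = inner1 (v i m a) (v i m a') := by
      intro a a'
      simp [Matrix.mul_apply, Matrix.conjTranspose_apply, inner1, mul_comm]
    rw [this]
    cases a <;> cases a' <;> simp [h1, h2, h3, h4, Matrix.one_apply]
  have hPu : ∀ m, P m * (P m)ᴴ = 1 := fun m => unit_of 0 m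
  have hQu : ∀ n, Q n * (Q n)ᴴ = 1 := fun n => unit_of 1 n
  have hPu' : ∀ m, (P m)ᴴ * P m = 1 := fun m => mul_eq_one_comm.mp (hPu m)
  have hQt : ∀ n, (Q n)ᵀ * ((Q n)ᵀ)ᴴ = 1 := by
    intro n
    have e : ((Q n)ᵀ)ᴴ = ((Q n)ᴴ)ᵀ := by ext a b; rfl
    rw [e, ← Matrix.transpose_mul, mul_eq_one_comm.mp (hQu n), Matrix.transpose_one]
  have hC' : Cᴴ * C = 1 := mul_eq_one_comm.mp hC
  set N : Bool → Bool → Matrix Bool Bool ℂ := fun m n => P m * (C * (Q n)ᵀ) with hN_def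
  -- amplitude formula
  have key : ∀ c' o' : Fin 2 → Bool,
      inner' (tensor fun i => v i (c' i) (o' i)) ψ
        = N (c' 0) (c' 1) (o' 0) (o' 1) * r := by
    intro c' o'
    rw [hAmp]
    congr 1
    simp [hN_def, Matrix.mul_apply, Fintype.sum_bool, hP_def, hQ_def, Matrix.transpose_apply]
    ring
  -- the crucial identity
  have hNid : ∀ m n m' n', N m n' * (N m' n')ᴴ * N m' n = N m n := by
    intro m n m' n'
    simp only [hN_def, Matrix.conjTranspose_mul, Matrix.mul_assoc]
    rw [cancel_mat _ _ _ (hPu' m'), cancel_mat _ _ _ hC', cancel_mat _ _ _ (hQt n')]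
  -- original amplitude nonzero
  have hN0 : N (c 0) (c 1) (o 0) (o 1) ≠ 0 := by
    intro h
    exact ho (by rw [key c o, h, zero_mul])
  -- extract a global section
  have hent : N (c 0) (c 1) (o 0) (o 1)
      = ∑ a', ∑ b', N (c 0) (!(c 1)) (o 0) b'
          * (starRingEnd ℂ) (N (!(c 0)) (!(c 1)) a' b') * N (!(c 0)) (c 1) a' (o 1) := by
    conv_lhs => rw [← hNid (c 0) (c 1) (!(c 0)) (!(c 1))]
    rw [Matrix.mul_apply]
    refine Finset.sum_congr rfl fun a' _ => ?_
    rw [Matrix.mul_apply, Finset.sum_mul]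
    refine Finset.sum_congr rfl fun b' _ => ?_
    rw [Matrix.conjTranspose_apply, starRingEnd_apply]
  have hN0' : (∑ a', ∑ b', N (c 0) (!(c 1)) (o 0) b'
      * (starRingEnd ℂ) (N (!(c 0)) (!(c 1)) a' b') * N (!(c 0)) (c 1) a' (o 1)) ≠ 0 := by
    rw [← hent]; exact hN0
  obtain ⟨a', -, h1⟩ := Finset.exists_ne_zero_of_sum_ne_zero hN0'
  obtain ⟨b', -, h2⟩ := Finset.exists_ne_zero_of_sum_ne_zero h1
  have f1 : N (c 0) (!(c 1)) (o 0) b' ≠ 0 := fun h => h2 (by rw [h]; ring)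
  have f2 : N (!(c 0)) (!(c 1)) a' b' ≠ 0 := by
    intro h; exact h2 (by rw [h]; simp)
  have f3 : N (!(c 0)) (c 1) a' (o 1) ≠ 0 := fun h => h2 (by rw [h]; ring)
  -- build the global assignment
  refine ⟨![fun m => if m = c 0 then o 0 else a', fun n => if n = c 1 then o 1 else b'],
    ?_, ?_⟩
  · intro c'
    rw [key c' (fun i => (![fun m => if m = c 0 then o 0 else a',
        fun n => if n = c 1 then o 1 else b'] : Fin 2 → Bool → Bool) i (c' i))]
    simp only [Matrix.cons_val_zero, Matrix.cons_val_one, Matrix.head_cons]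
    refine mul_ne_zero ?_ hr
    by_cases h0 : c' 0 = c 0 <;> by_cases h1' : c' 1 = c 1
    · rw [h0, h1']; simpa using hN0
    · have e1 : c' 1 = !(c 1) := by revert h1'; cases c' 1 <;> cases c 1 <;> simp
      rw [h0, e1]
      simpa using f1
    · have e0 : c' 0 = !(c 0) := by revert h0; cases c' 0 <;> cases c 0 <;> simp
      rw [e0, h1']
      simpa using f3
    · have e0 : c' 0 = !(c 0) := by revert h0; cases c' 0 <;> cases c 0 <;> simp
      have e1 : c' 1 = !(c 1) := by revert h1'; cases c' 1 <;> cases c 1 <;> simp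
      rw [e0, e1]
      simpa using f2
  · rw [Fin.forall_fin_two]
    constructor <;> simp
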